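/- arXiv:1311.2986 — 8 statements merged into one kernel-verified Lean document; each statement's English description precedes it below -/
import Mathlib

section
/- Let (X, τ) be a non-compact, locally compact Hausdorff topological space. Then the second de Groot dual of τ equals τ, i.e. τ = τ^{GG}. -/
/-!
Closed sets of a locally compact Hausdorff space are exactly the compact sets of the
co-compact topology `τ^G`. One inclusion is Alexander's subbasis lemma: a cover of a closed
set `s` by complements `kᶜ` of compacta has a finite subcover, since after choosing one
member `k₀ᶜ` the others cover the `τ`-compact set `s ∩ k₀` by `τ`-open sets. For the other,
if `x ∉ s` then every `a ∈ s` has a `τ^G`-neighbourhood `kᶜ` disjoint from a compact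
neighbourhood `k ⊆ {a}ᶜ` of `x`, and compactness of `s` in `τ^G` separates all of `s` from
`x` at once. Both topologies being `T₁`, every set is saturated, so the closed subbasis of
`τ^{GG}` consists of the `τ`-closed sets.
-/

/-- A set is saturated if it is an intersection of open sets. -/
def IsSaturatedSet {X : Type*} (t : TopologicalSpace X) (s : Set X) : Prop :=
  ∃ F : Set (Set X), (∀ u ∈ F, t.IsOpen u) ∧ s = ⋂₀ F

/-- The de Groot dual (co-compact) topology: the topology whose closed sets are
generated by the family of all compact saturated sets used as a base for closed sets. -/
def deGrootDual {X : Type*} (t : TopologicalSpace X) : TopologicalSpace X :=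
  TopologicalSpace.generateFrom
    {v : Set X | ∃ k : Set X, @IsCompact X t k ∧ IsSaturatedSet t k ∧ v = kᶜ}

open Topology Filter Set TopologicalSpace

theorem isSaturatedSet_of_t1Space {X : Type*} {t : TopologicalSpace X} [@T1Space X t]
    (s : Set X) : IsSaturatedSet t s := by
  refine ⟨(fun y => ({y}ᶜ : Set X)) '' sᶜ, ?_, ?_⟩
  · rintro u ⟨y, -, rfl⟩
    exact isOpen_compl_singleton
  · ext x
    simp only [sInter_image, mem_iInter, mem_compl_iff, mem_singleton_iff]
    exact ⟨fun hx y hy h => hy (h ▸ hx), fun h => not_not.mp fun hx => h x hx rfl⟩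

section

variable {X : Type*} [t : TopologicalSpace X]

theorem isOpen_deGrootDual_compl [T1Space X] {k : Set X} (hk : IsCompact k) :
    IsOpen[deGrootDual t] kᶜ :=
  isOpen_generateFrom_of_mem ⟨k, hk, isSaturatedSet_of_t1Space k, rfl⟩

theorem t1Space_deGrootDual [T1Space X] : @T1Space X (deGrootDual t) :=
  @T1Space.mk X (deGrootDual t) fun _ =>
    @IsClosed.mk X (deGrootDual t) _ (isOpen_deGrootDual_compl isCompact_singleton)

theorem le_deGrootDual [T2Space X] : t ≤ deGrootDual t :=
  le_generateFrom fun _ ⟨_, hk, _, hv⟩ => hv ▸ hk.isClosed.isOpen_compl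

theorem isCompact_deGrootDual_of_isClosed [T2Space X] {s : Set X} (hs : IsClosed s) :
    @IsCompact X (deGrootDual t) s := by
  refine @isCompact_generateFrom X (deGrootDual t) _ rfl s fun P hPS hsP => ?_
  rcases P.eq_empty_or_nonempty with rfl | ⟨_, hk₀P⟩
  · exact ⟨∅, subset_rfl, finite_empty, hsP⟩
  obtain ⟨k₀, hk₀, -, rfl⟩ := hPS hk₀P
  obtain ⟨Q, hQP, hQ, hcover⟩ := (hk₀.inter_left hs).elim_finite_subcover_image (c := id)
    (fun _ hv => le_deGrootDual _ (isOpen_generateFrom_of_mem (hPS hv)))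
    (by simpa only [id, ← sUnion_eq_biUnion] using inter_subset_left.trans hsP)
  refine ⟨insert k₀ᶜ Q, insert_subset hk₀P hQP, hQ.insert _, fun y hy => ?_⟩
  by_cases hyk₀ : y ∈ k₀
  · obtain ⟨v, hvQ, hyv⟩ := mem_iUnion₂.mp (hcover ⟨hy, hyk₀⟩)
    exact ⟨v, mem_insert_of_mem _ hvQ, hyv⟩
  · exact ⟨k₀ᶜ, mem_insert _ _, hyk₀⟩

theorem isClosed_of_isCompact_deGrootDual [T1Space X] [LocallyCompactSpace X] {s : Set X}
    (hs : @IsCompact X (deGrootDual t) s) : IsClosed s := by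
  refine isOpen_compl_iff.mp (isOpen_iff_mem_nhds.mpr fun x hx => ?_)
  have hsep : ∀ a ∈ s, Disjoint (@nhds X (deGrootDual t) a) (𝓝 x) := fun a ha => by
    obtain ⟨k, hkx, hka, hk⟩ :=
      local_compact_nhds (compl_singleton_mem_nhds (ne_of_mem_of_not_mem ha hx).symm)
    have hak : kᶜ ∈ @nhds X (deGrootDual t) a :=
      @IsOpen.mem_nhds X (deGrootDual t) _ _ (isOpen_deGrootDual_compl hk) fun h => hka h rfl
    exact disjoint_of_disjoint_of_mem disjoint_compl_left hak hkx
  have hsx : Disjoint (𝓟 s) (𝓝 x) :=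
    ((@IsCompact.disjoint_nhdsSet_left X (deGrootDual t) _ _ hs).mpr hsep).mono_left
      (@principal_le_nhdsSet X (deGrootDual t) s)
  exact disjoint_principal_left.mp hsx

end

theorem deGrootDual_dual_eq_general {X : Type*} (t : TopologicalSpace X)
    (h2 : @T2Space X t) (hlc : @LocallyCompactSpace X t) :
    t = deGrootDual (deGrootDual t) := by
  have : @T1Space X (deGrootDual t) := t1Space_deGrootDual
  suffices {v : Set X | ∃ k, @IsCompact X (deGrootDual t) k ∧
      IsSaturatedSet (deGrootDual t) k ∧ v = kᶜ} = {v | IsOpen v} by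
    rw [deGrootDual.eq_1 (deGrootDual t), this, generateFrom_setOfPred_isOpen]
  ext v
  constructor
  · rintro ⟨k, hk, -, rfl⟩
    exact (isClosed_of_isCompact_deGrootDual hk).isOpen_compl
  · intro hv
    exact ⟨vᶜ, isCompact_deGrootDual_of_isClosed hv.isClosed_compl,
      isSaturatedSet_of_t1Space _, (compl_compl v).symm⟩

/-- For a non-compact, locally compact Hausdorff space, the second de Groot dual
of the topology equals the topology itself: `τ = τ^{GG}`. -/
theorem deGrootDual_dual_eq {X : Type*} (t : TopologicalSpace X)
    (h2 : @T2Space X t) (hlc : @LocallyCompactSpace X t) (hnc : ¬ @CompactSpace X t) :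
    t = deGrootDual (deGrootDual t) :=
  deGrootDual_dual_eq_general t h2 hlc
end

section
/- Let S be a set, ⊥ ∈ S, and ≺ a binary relation on S whose restriction to S ∖ {⊥} is irreflexive and transitive. Suppose there exists a finite set M ⊆ S ∖ {⊥} such that for every x ∈ S there exists m ∈ M with x ≺ m or m ≺ x. Then there is no binary relation ⊑ on S such that (S, ⊑, ≺) is a causal site with least element ⊥. -/
/-- A causal site of Christensen and Crane: a set `S` of regions with an inclusion
partial order `incl` (with binary suprema `sup` and least element `bot`) and a causal
relation `caus` whose restriction to `S ∖ {bot}` is a strict partial order,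
satisfying the four linking axioms. -/
structure CausalSite (S : Type*) where
  incl : S → S → Prop
  caus : S → S → Prop
  sup : S → S → S
  bot : S
  incl_refl : ∀ a, incl a a
  incl_antisymm : ∀ a b, incl a b → incl b a → a = b
  incl_trans : ∀ a b c, incl a b → incl b c → incl a c
  bot_incl : ∀ a, incl bot a
  incl_sup_left : ∀ a b, incl a (sup a b)
  incl_sup_right : ∀ a b, incl b (sup a b)
  sup_incl : ∀ a b c, incl a c → incl b c → incl (sup a b) c
  caus_irrefl : ∀ a, a ≠ bot → ¬ caus a a
  caus_trans : ∀ a b c, a ≠ bot → b ≠ bot → c ≠ bot →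
    caus a b → caus b c → caus a c
  ax_i : ∀ a b c, incl b a → caus a c → caus b c
  ax_ii : ∀ a b c, incl b a → caus c a → caus c b
  ax_iii : ∀ a b c, caus a c → caus b c → caus (sup a b) c
  ax_iv : ∀ a b, ∃ ba, caus ba a ∧ incl ba b ∧
    ∀ c, caus c a → incl c b → incl c ba

/-!
A finite join `t` of the elements of `M` contains every `m ∈ M`, and `t` is causally related to
some `m ∈ M`. Axioms (i) and (ii) transport `t ≺ m` or `m ≺ t` along `m ⊑ t` to `m ≺ m`,
contradicting irreflexivity since `m ≠ ⊥`.
-/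

namespace CausalSite

variable {S : Type*} (C : CausalSite S)

theorem exists_upper_bound (M : Finset S) : ∃ t, ∀ m ∈ M, C.incl m t := by
  classical
  induction M using Finset.induction_on with
  | empty => exact ⟨C.bot, by simp⟩
  | insert a M _ ih =>
    obtain ⟨t, ht⟩ := ih
    refine ⟨C.sup a t, fun m hm => ?_⟩
    rcases Finset.mem_insert.mp hm with rfl | hm
    · exact C.incl_sup_left m t
    · exact C.incl_trans _ _ _ (ht m hm) (C.incl_sup_right a t)

variable {C}

theorem not_caus_of_incl {a b : S} (hab : C.incl a b) (ha : a ≠ C.bot) : ¬ C.caus b a :=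
  fun hba => C.caus_irrefl a ha (C.ax_i b a a hab hba)

theorem not_caus_of_incl' {a b : S} (hab : C.incl a b) (ha : a ≠ C.bot) : ¬ C.caus a b :=
  fun hcaus => C.caus_irrefl a ha (C.ax_ii b a a hab hcaus)

end CausalSite

theorem no_causalSite_of_finite_comparability_core_general {S : Type*} (bot : S)
    (caus : S → S → Prop)
    (M : Finset S) (hM : ∀ m ∈ M, m ≠ bot)
    (hcov : ∀ x : S, ∃ m ∈ M, caus x m ∨ caus m x) :
    ¬ ∃ C : CausalSite S, C.caus = caus ∧ C.bot = bot := by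
  rintro ⟨C, rfl, rfl⟩
  obtain ⟨t, ht⟩ := C.exists_upper_bound M
  obtain ⟨m, hm, htm | hmt⟩ := hcov t
  · exact CausalSite.not_caus_of_incl (ht m hm) (hM m hm) htm
  · exact CausalSite.not_caus_of_incl' (ht m hm) (hM m hm) hmt

/-- Let `S` be a set with a distinguished element `⊥` and a relation `≺` whose
restriction to `S ∖ {⊥}` is irreflexive and transitive. If there is a finite set
`M ⊆ S ∖ {⊥}` such that every `x ∈ S` satisfies `x ≺ m` or `m ≺ x` for some `m ∈ M`,
then there is no inclusion relation making `(S, ⊑, ≺)` a causal site with least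
element `⊥`. -/
theorem no_causalSite_of_finite_comparability_core {S : Type*} (bot : S)
    (caus : S → S → Prop)
    (hirr : ∀ a, a ≠ bot → ¬ caus a a)
    (htrans : ∀ a b c, a ≠ bot → b ≠ bot → c ≠ bot → caus a b → caus b c → caus a c)
    (M : Finset S) (hM : ∀ m ∈ M, m ≠ bot)
    (hcov : ∀ x : S, ∃ m ∈ M, caus x m ∨ caus m x) :
    ¬ ∃ C : CausalSite S, C.caus = caus ∧ C.bot = bot :=
  no_causalSite_of_finite_comparability_core_general bot caus M hM hcov
end

section
/- Let (P, ≤) be any partially ordered set and let P^F denote the family of all finite subsets of P. For K, L ∈ P^F define K ≺ L if and only if k < l for every pair (k, l) ∈ K × L. Then (P^F, ⊆, ≺) is a causal site, with least element the empty set and binary suprema given by unions. -/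
namespace Finset

variable {P : Type*} [Preorder P]

def StrictlyBelow (K L : Finset P) : Prop := ∀ k ∈ K, ∀ l ∈ L, k < l

theorem not_strictlyBelow_self {K : Finset P} (hK : K.Nonempty) : ¬ K.StrictlyBelow K := by
  obtain ⟨k, hk⟩ := hK
  exact fun h => lt_irrefl k (h k hk k hk)

theorem StrictlyBelow.trans {K L M : Finset P} (hL : L.Nonempty)
    (hKL : K.StrictlyBelow L) (hLM : L.StrictlyBelow M) : K.StrictlyBelow M := by
  obtain ⟨m, hm⟩ := hL
  exact fun k hk l hl => (hKL k hk m hm).trans (hLM m hm l hl)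

theorem StrictlyBelow.mono_left {K K' L : Finset P} (h : K.StrictlyBelow L) (hK : K' ⊆ K) :
    K'.StrictlyBelow L :=
  fun k hk => h k (hK hk)

theorem StrictlyBelow.mono_right {K L L' : Finset P} (h : K.StrictlyBelow L) (hL : L' ⊆ L) :
    K.StrictlyBelow L' :=
  fun k hk l hl => h k hk l (hL hl)

theorem StrictlyBelow.union [DecidableEq P] {K K' L : Finset P}
    (h : K.StrictlyBelow L) (h' : K'.StrictlyBelow L) : (K ∪ K').StrictlyBelow L := by
  intro k hk
  rcases mem_union.1 hk with hk | hk
  exacts [h k hk, h' k hk]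

theorem exists_greatest_subset_strictlyBelow (L B : Finset P) :
    ∃ C, C.StrictlyBelow L ∧ C ⊆ B ∧ ∀ D, D.StrictlyBelow L → D ⊆ B → D ⊆ C := by
  classical
  refine ⟨B.filter (fun x => ∀ l ∈ L, x < l), fun k hk => (mem_filter.1 hk).2,
    filter_subset _ _, fun D hDL hDB k hk => mem_filter.2 ⟨hDB hk, hDL k hk⟩⟩

end Finset

/-- For any poset `(P, ≤)`, the family `P^F` of finite subsets of `P`, with set
inclusion as the inclusion relation, `K ≺ L ↔ k < l for all (k, l) ∈ K × L` as the
causal relation, the empty set as least element and union as binary supremum, is a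
causal site. -/
theorem finsets_causalSite {P : Type*} [PartialOrder P] [DecidableEq P] :
    ∃ C : CausalSite (Finset P),
      C.incl = (fun K L => K ⊆ L) ∧
      C.caus = (fun K L => ∀ k ∈ K, ∀ l ∈ L, k < l) ∧
      C.bot = ∅ ∧
      C.sup = (fun K L => K ∪ L) := by
  refine ⟨{
    incl := (· ⊆ ·)
    caus := Finset.StrictlyBelow
    sup := (· ∪ ·)
    bot := ∅
    incl_refl := Finset.Subset.refl
    incl_antisymm := fun _ _ => Finset.Subset.antisymm
    incl_trans := fun _ _ _ => Finset.Subset.trans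
    bot_incl := Finset.empty_subset
    incl_sup_left := fun _ _ => Finset.subset_union_left
    incl_sup_right := fun _ _ => Finset.subset_union_right
    sup_incl := fun _ _ _ => Finset.union_subset
    caus_irrefl := fun _ hK => Finset.not_strictlyBelow_self (Finset.nonempty_iff_ne_empty.2 hK)
    caus_trans := fun _ _ _ _ hL _ hKL hLM => hKL.trans (Finset.nonempty_iff_ne_empty.2 hL) hLM
    ax_i := fun _ _ _ hK h => h.mono_left hK
    ax_ii := fun _ _ _ hL h => h.mono_right hL
    ax_iii := fun _ _ _ => Finset.StrictlyBelow.union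
    ax_iv := Finset.exists_greatest_subset_strictlyBelow
  }, rfl, rfl, rfl, rfl⟩
end

section
/- Let (P, π) be a framework. Then the double dual framework (P^{dd}, π^{dd}) is isomorphic to the quotient framework of (P, π) with respect to the equivalence relation x ∼ y ⟺ π(x) = π(y). Moreover, if (P, π) is T0, then (P^{dd}, π^{dd}) is isomorphic to (P, π) itself. -/
/-- A framework on `P` is just a family `π ⊆ 2^P`, the framology. For `x ∈ P`,
`framePoint π x = π(x) = {U ∈ π : x ∈ U}` is the associated abstract point. -/
def framePoint {P : Type*} (π : Set (Set P)) (x : P) : Set (Set P) :=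
  {U | U ∈ π ∧ x ∈ U}

/-- The framology of the dual framework: the places of the dual are the members of `π`,
and its framology is `{π(x) : x ∈ P}`. -/
def dualFramology {P : Type*} (π : Set (Set P)) : Set (Set ↥π) :=
  {V | ∃ x : P, V = {U : ↥π | x ∈ (U : Set P)}}

/-- A framework `(P, π)` is T₀ if distinct places are separated by some member of the
framology. -/
def IsT0Framework {P : Type*} (π : Set (Set P)) : Prop :=
  ∀ x y : P, x ≠ y → ∃ U ∈ π, (x ∈ U ∧ y ∉ U) ∨ (x ∉ U ∧ y ∈ U)

/-- An isomorphism of frameworks: a bijective map sending the framology onto the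
framology, whose inverse is also a framework morphism. -/
def IsFrameworkIso {P Q : Type*} (π : Set (Set P)) (σ : Set (Set Q)) (f : P → Q) : Prop :=
  Function.Bijective f ∧ (∀ U ∈ π, f '' U ∈ σ) ∧ (∀ V ∈ σ, f ⁻¹' V ∈ π)

/-- The equivalence relation `x ∼ y ⟺ π(x) = π(y)` on the places of a framework. -/
def frameSetoid {P : Type*} (π : Set (Set P)) : Setoid P where
  r x y := framePoint π x = framePoint π y
  iseqv := ⟨fun _ => rfl, Eq.symm, Eq.trans⟩

/-- The framology of the quotient framework with respect to `∼`. -/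
def quotFramology {P : Type*} (π : Set (Set P)) :
    Set (Set (Quotient (frameSetoid π))) :=
  {W | ∃ U ∈ π, W = Quotient.mk (frameSetoid π) '' U}

/-! `x ↦ π(x)` maps `P` onto the places of the double dual, and its fibres are exactly the
classes of `∼`. The member `U ∈ π`, seen as a place of the dual, gives the member
`{V | U ∈ V}` of the double dual framology, which is the image of `U` under `x ↦ π(x)`; so the
framology of the double dual is the image of `π`, and the induced bijection on `P_∼`
(or on `P` itself when `P` is T₀) is an isomorphism. -/

theorem isFrameworkIso_of_bijective {P Q : Type*} {π : Set (Set P)} {σ : Set (Set Q)}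
    {f : P → Q} (hf : Function.Bijective f) (hσ : σ = Set.image f '' π) :
    IsFrameworkIso π σ f := by
  subst hσ
  refine ⟨hf, fun U hU => Set.mem_image_of_mem _ hU, ?_⟩
  rintro _ ⟨U, hU, rfl⟩
  rwa [Set.preimage_image_eq U hf.injective]

section DoubleDual

variable {P : Type*} (π : Set (Set P))

def toDoubleDual (x : P) : ↥(dualFramology π) :=
  ⟨{U : ↥π | x ∈ (U : Set P)}, x, rfl⟩

theorem toDoubleDual_surjective : Function.Surjective (toDoubleDual π) := by
  rintro ⟨_, x, rfl⟩
  exact ⟨x, rfl⟩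

theorem toDoubleDual_eq_iff {x y : P} :
    toDoubleDual π x = toDoubleDual π y ↔ ∀ U ∈ π, x ∈ U ↔ y ∈ U := by
  simp [toDoubleDual, Subtype.ext_iff, Set.ext_iff]

theorem framePoint_eq_iff {x y : P} :
    framePoint π x = framePoint π y ↔ ∀ U ∈ π, x ∈ U ↔ y ∈ U := by
  simp only [framePoint, Set.ext_iff, Set.mem_ofPred_eq, and_congr_right_iff]

theorem ker_toDoubleDual : Setoid.ker (toDoubleDual π) = frameSetoid π :=
  Setoid.ext fun _ _ => (toDoubleDual_eq_iff π).trans (framePoint_eq_iff π).symm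

theorem IsT0Framework.toDoubleDual_injective (hπ : IsT0Framework π) :
    Function.Injective (toDoubleDual π) := by
  intro x y hxy
  by_contra hne
  obtain ⟨U, hU, hsep⟩ := hπ x y hne
  have := (toDoubleDual_eq_iff π).mp hxy U hU
  tauto

theorem image_toDoubleDual {U : Set P} (hU : U ∈ π) :
    toDoubleDual π '' U = {V : ↥(dualFramology π) | (⟨U, hU⟩ : ↥π) ∈ (V : Set ↥π)} := by
  ext V
  obtain ⟨x, rfl⟩ := toDoubleDual_surjective π V
  refine ⟨?_, fun hx => ⟨x, hx, rfl⟩⟩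
  rintro ⟨y, hy, hyx⟩
  rw [← hyx]
  exact hy

theorem dualFramology_dualFramology :
    dualFramology (dualFramology π) = Set.image (toDoubleDual π) '' π := by
  ext W
  constructor
  · rintro ⟨⟨U, hU⟩, rfl⟩
    exact ⟨U, hU, image_toDoubleDual π hU⟩
  · rintro ⟨U, hU, rfl⟩
    exact ⟨⟨U, hU⟩, image_toDoubleDual π hU⟩

theorem quotFramology_eq_image :
    quotFramology π = Set.image (Quotient.mk (frameSetoid π)) '' π := by
  ext W
  exact exists_congr fun U => and_congr_right fun _ => eq_comm

end DoubleDual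

/-- The double dual framework of `(P, π)` is isomorphic to the quotient framework of
`(P, π)` by the equivalence `x ∼ y ⟺ π(x) = π(y)`; moreover, if `(P, π)` is T₀ then the
double dual is isomorphic to `(P, π)` itself. -/
theorem doubleDual_iso_quotient {P : Type*} (π : Set (Set P)) :
    (∃ f : Quotient (frameSetoid π) → ↥(dualFramology π),
      IsFrameworkIso (quotFramology π) (dualFramology (dualFramology π)) f) ∧
    (IsT0Framework π →
      ∃ f : P → ↥(dualFramology π),
        IsFrameworkIso π (dualFramology (dualFramology π)) f) := by
  constructor
  · have hle := (ker_toDoubleDual π).ge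
    refine ⟨Quotient.lift (toDoubleDual π) hle, isFrameworkIso_of_bijective
      ⟨(Setoid.lift_injective_iff_ker_eq_of_le hle).mpr (ker_toDoubleDual π),
        Quotient.lift_surjective _ hle (toDoubleDual_surjective π)⟩ ?_⟩
    simp only [dualFramology_dualFramology, quotFramology_eq_image, Set.image_image,
      Quotient.lift_mk]
  · exact fun hπ => ⟨toDoubleDual π, isFrameworkIso_of_bijective
      ⟨hπ.toDoubleDual_injective, toDoubleDual_surjective π⟩ (dualFramology_dualFramology π)⟩
end

section
/- A framework (P, π) is isomorphic to the dual framework of some framework if and only if (P, π) is T0. -/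
open Function

section

variable {P Q : Type*}

theorem isT0Framework_dualFramology (σ : Set (Set Q)) : IsT0Framework (dualFramology σ) := by
  intro U V hUV
  obtain ⟨q, hq⟩ : ∃ q, ¬(q ∈ (U : Set Q) ↔ q ∈ (V : Set Q)) := by
    by_contra! h
    exact hUV (Subtype.ext (Set.ext h))
  refine ⟨{W : ↥σ | q ∈ (W : Set Q)}, ⟨q, rfl⟩, ?_⟩
  simp only [Set.mem_ofPred_eq]
  tauto

theorem IsFrameworkIso.isT0Framework {π : Set (Set P)} {σ : Set (Set Q)} {f : P → Q}
    (hf : IsFrameworkIso π σ f) (hσ : IsT0Framework σ) : IsT0Framework π := by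
  intro x y hxy
  obtain ⟨V, hV, hsep⟩ := hσ (f x) (f y) (hf.1.1.ne hxy)
  exact ⟨f ⁻¹' V, hf.2.2 V hV, hsep⟩

def dualPoint (π : Set (Set P)) (x : P) : ↥(dualFramology π) :=
  ⟨{U : ↥π | x ∈ (U : Set P)}, x, rfl⟩

variable {π : Set (Set P)}

theorem IsT0Framework.dualPoint_injective (h : IsT0Framework π) : Injective (dualPoint π) := by
  intro x y hxy
  by_contra hne
  obtain ⟨U, hU, hsep⟩ := h x y hne
  have hmem : (⟨U, hU⟩ : ↥π) ∈ (dualPoint π x : Set ↥π) ↔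
      (⟨U, hU⟩ : ↥π) ∈ (dualPoint π y : Set ↥π) := by
    rw [hxy]
  simp only [dualPoint, Set.mem_ofPred_eq] at hmem
  tauto

theorem dualPoint_surjective (π : Set (Set P)) : Surjective (dualPoint π) := by
  rintro ⟨V, x, rfl⟩
  exact ⟨x, rfl⟩

theorem preimage_dualPoint (U : ↥π) :
    dualPoint π ⁻¹' {W : ↥(dualFramology π) | U ∈ (W : Set ↥π)} = U := by
  ext x
  simp [dualPoint]

theorem image_dualPoint {U : Set P} (hU : U ∈ π) :
    dualPoint π '' U = {W : ↥(dualFramology π) | ⟨U, hU⟩ ∈ (W : Set ↥π)} := by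
  simpa only [preimage_dualPoint] using
    Set.image_preimage_eq {W : ↥(dualFramology π) | ⟨U, hU⟩ ∈ (W : Set ↥π)}
      (dualPoint_surjective π)

theorem IsT0Framework.isFrameworkIso_dualPoint (h : IsT0Framework π) :
    IsFrameworkIso π (dualFramology (dualFramology π)) (dualPoint π) := by
  refine ⟨⟨h.dualPoint_injective, dualPoint_surjective π⟩, fun U hU => ?_, ?_⟩
  · exact ⟨⟨U, hU⟩, image_dualPoint hU⟩
  · rintro V ⟨U, rfl⟩
    rw [preimage_dualPoint]
    exact U.2

end

universe u

/-- A framework is isomorphic to the dual framework of some framework if and only if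
it is T₀. -/
theorem iso_to_dual_iff_t0 {P : Type u} (π : Set (Set P)) :
    (∃ (Q : Type u) (σ : Set (Set Q)) (f : P → ↥σ),
      IsFrameworkIso π (dualFramology σ) f) ↔ IsT0Framework π := by
  constructor
  · rintro ⟨Q, σ, f, hf⟩
    exact hf.isT0Framework (isT0Framework_dualFramology σ)
  · intro h
    exact ⟨↥π, dualFramology π, dualPoint π, h.isFrameworkIso_dualPoint⟩
end

section
/- For every framework (P, π), the dual framework (P^d, π^d) is isomorphic to the triple dual framework (P^{ddd}, π^{ddd}). -/
/-! The canonical map `x ↦ σ(x)` from a framework `(Q, σ)` to its double dual is always a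
surjective morphism whose inverse image map also preserves framologies, and it is injective
as soon as `(Q, σ)` is T₀. Every dual framework is T₀: distinct `U ≠ U'` in `π` differ at some
place `x`, and then `π(x)` separates them. Applying this to `(Q, σ) = (P^d, π^d)` gives
`P^d ≅ P^{ddd}`. -/

namespace Framework

variable {Q : Type*} (σ : Set (Set Q))

def toDoubleDual (x : Q) : ↥(dualFramology σ) :=
  ⟨{U : ↥σ | x ∈ (U : Set Q)}, x, rfl⟩

theorem toDoubleDual_surjective : Function.Surjective (toDoubleDual σ) := by
  rintro ⟨_, x, rfl⟩
  exact ⟨x, rfl⟩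

theorem toDoubleDual_injective (h : IsT0Framework σ) : Function.Injective (toDoubleDual σ) := by
  intro x y hxy
  by_contra hne
  obtain ⟨U, hU, hsep⟩ := h x y hne
  have hmem : ∀ z, z ∈ U ↔ ⟨U, hU⟩ ∈ (toDoubleDual σ z : Set ↥σ) := fun _ => Iff.rfl
  rw [hmem x, hmem y, hxy] at hsep
  tauto

theorem image_toDoubleDual_mem {U : Set Q} (hU : U ∈ σ) :
    toDoubleDual σ '' U ∈ dualFramology (dualFramology σ) := by
  refine ⟨⟨U, hU⟩, Set.ext fun V => ⟨?_, ?_⟩⟩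
  · rintro ⟨x, hx, rfl⟩
    exact hx
  · obtain ⟨_, y, rfl⟩ := V
    exact fun hy => ⟨y, hy, rfl⟩

theorem preimage_toDoubleDual_mem {W : Set ↥(dualFramology σ)}
    (hW : W ∈ dualFramology (dualFramology σ)) : toDoubleDual σ ⁻¹' W ∈ σ := by
  obtain ⟨U, rfl⟩ := hW
  exact U.2

theorem isFrameworkIso_toDoubleDual (h : IsT0Framework σ) :
    IsFrameworkIso σ (dualFramology (dualFramology σ)) (toDoubleDual σ) :=
  ⟨⟨toDoubleDual_injective σ h, toDoubleDual_surjective σ⟩,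
    fun _ => image_toDoubleDual_mem σ, fun _ => preimage_toDoubleDual_mem σ⟩

theorem isT0Framework_dualFramology {P : Type*} (π : Set (Set P)) :
    IsT0Framework (dualFramology π) := by
  intro U U' hne
  obtain ⟨x, hx⟩ : ∃ x, ¬(x ∈ (U : Set P) ↔ x ∈ (U' : Set P)) := by
    by_contra! h
    exact hne (Subtype.ext (Set.ext h))
  refine ⟨{W : ↥π | x ∈ (W : Set P)}, ⟨x, rfl⟩, ?_⟩
  tauto

end Framework

/-- For every framework `(P, π)`, the dual framework is isomorphic to the triple dual
framework. -/
theorem dual_iso_tripleDual {P : Type*} (π : Set (Set P)) :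
    ∃ f : ↥π → ↥(dualFramology (dualFramology π)),
      IsFrameworkIso (dualFramology π)
        (dualFramology (dualFramology (dualFramology π))) f :=
  ⟨_, Framework.isFrameworkIso_toDoubleDual _ (Framework.isT0Framework_dualFramology π)⟩
end

section
/- Let (P, ⊑, ≺) be a causal site, let π be the family of all maximal centered subsets of P (maximal with respect to set inclusion), let X = π, and let τ be the topology on X generated by taking the family {π(x) : x ∈ P}, where π(x) = {U ∈ π : x ∈ U}, as a subbase for the closed sets. Then the topological space (X, τ) is compact and T1. -/
/-- A subset `F` of a causal site is centered if every finite nonempty collection of its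
elements has a common lower bound different from `⊥`. -/
def CausalSite.Centered {S : Type*} (C : CausalSite S) (F : Set S) : Prop :=
  ∀ G : Finset S, ↑G ⊆ F → G.Nonempty →
    ∃ y : S, y ≠ C.bot ∧ ∀ x ∈ G, C.incl y x

/-- A maximal centered subset of a causal site. -/
def CausalSite.MaxCentered {S : Type*} (C : CausalSite S) (F : Set S) : Prop :=
  C.Centered F ∧ ∀ F' : Set S, C.Centered F' → F ⊆ F' → F = F'

/-- The points of the weakly causal topology: the maximal centered subsets of `P`. -/
def CausalSite.Points {S : Type*} (C : CausalSite S) : Type _ :=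
  {F : Set S // C.MaxCentered F}

/-- The weakly causal topology: generated by the family `{π(x) : x ∈ P}`, where
`π(x) = {U maximal centered : x ∈ U}`, as a subbase for the closed sets. -/
def CausalSite.weaklyCausalTopology {S : Type*} (C : CausalSite S) :
    TopologicalSpace C.Points :=
  TopologicalSpace.generateFrom
    {V : Set C.Points | ∃ x : S, V = {U : C.Points | x ∈ U.1}ᶜ}

namespace CausalSite

variable {S : Type*} (C : CausalSite S)

theorem centered_of_forall_finset_subset {F : Set S}
    (h : ∀ G : Finset S, ↑G ⊆ F → ∃ F', C.Centered F' ∧ ↑G ⊆ F') : C.Centered F := by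
  intro G hGF hG
  obtain ⟨F', hF', hGF'⟩ := h G hGF
  exact hF' G hGF' hG

theorem exists_maxCentered_superset {F : Set S} (hF : C.Centered F) :
    ∃ M, F ⊆ M ∧ C.MaxCentered M := by
  have chain_bound : ∀ c ⊆ {F | C.Centered F}, IsChain (· ⊆ ·) c → c.Nonempty →
      ∃ ub ∈ {F | C.Centered F}, ∀ s ∈ c, s ⊆ ub := by
    intro c hc hchain hne
    refine ⟨⋃₀ c, C.centered_of_forall_finset_subset fun G hG => ?_,
      fun s => Set.subset_sUnion_of_mem⟩
    obtain ⟨F', hF'c, hGF'⟩ := hchain.directedOn.exists_mem_subset_of_finset_subset_biUnion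
      hne (by rwa [← Set.sUnion_eq_biUnion])
    exact ⟨F', hc hF'c, hGF'⟩
  obtain ⟨M, hFM, hM⟩ := zorn_subset_nonempty _ chain_bound F hF
  exact ⟨M, hFM, hM.1, fun F' hF' hMF' => hMF'.antisymm (hM.2 hF' hMF')⟩

theorem exists_point_superset {F : Set S}
    (h : ∀ G : Finset S, ↑G ⊆ F → ∃ U : C.Points, ↑G ⊆ U.1) : ∃ M : C.Points, F ⊆ M.1 := by
  obtain ⟨M, hFM, hM⟩ := C.exists_maxCentered_superset <|
    C.centered_of_forall_finset_subset fun G hG =>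
      let ⟨U, hGU⟩ := h G hG
      ⟨U.1, U.2.1, hGU⟩
  exact ⟨⟨M, hM⟩, hFM⟩

theorem points_eq_of_subset {U V : C.Points} (h : U.1 ⊆ V.1) : U = V :=
  Subtype.ext (U.2.2 V.1 V.2.1 h)

local instance : TopologicalSpace C.Points := C.weaklyCausalTopology

theorem isClosed_setOf_mem (x : S) : IsClosed {U : C.Points | x ∈ U.1} :=
  isOpen_compl_iff.1 (TopologicalSpace.GenerateOpen.basic _ ⟨x, rfl⟩)

theorem compactSpace_points : CompactSpace C.Points := by
  refine compactSpace_generateFrom rfl fun P hP hcover => ?_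
  by_contra! hfin
  -- with no finite subcover, the regions `x` with `π(x)ᶜ ∈ P` lie in a common point
  obtain ⟨M, hM⟩ := C.exists_point_superset (F := {x | {U : C.Points | x ∈ U.1}ᶜ ∈ P})
    fun G hG => by
      obtain ⟨U, hU⟩ := Set.ne_univ_iff_exists_notMem _ |>.1 <|
        hfin _ (Set.image_subset_iff.2 hG) (G.finite_toSet.image _)
      refine ⟨U, fun x hx => ?_⟩
      by_contra hxU
      exact hU ⟨_, Set.mem_image_of_mem _ hx, hxU⟩
  obtain ⟨_, hVP, hMV⟩ := Set.mem_sUnion.1 (hcover ▸ Set.mem_univ M)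
  obtain ⟨x, rfl⟩ := hP hVP
  exact hMV (hM (show x ∈ {x | _} from hVP))

theorem t1Space_points : T1Space C.Points := by
  refine ⟨fun U => ?_⟩
  have hU : {U} = ⋂ x ∈ U.1, {V : C.Points | x ∈ V.1} := by
    ext V
    simp only [Set.mem_singleton_iff, Set.mem_iInter, Set.mem_ofPred_eq]
    exact ⟨fun h => h ▸ fun _ => id, fun h => (C.points_eq_of_subset h).symm⟩
  rw [hU]
  exact isClosed_biInter fun x _ => C.isClosed_setOf_mem x

end CausalSite

/-- The weakly causal topology generated by a causal site is compact and T₁. -/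
theorem weaklyCausalTopology_compact_t1 {S : Type*} (C : CausalSite S) :
    @CompactSpace C.Points C.weaklyCausalTopology ∧
      @T1Space C.Points C.weaklyCausalTopology :=
  ⟨C.compactSpace_points, C.t1Space_points⟩
end

section
/- Let (X, τ) be a T1 topological space and let C be the family of all closed subsets of X. Let η be the set of all families of closed sets that are maximal (with respect to set inclusion) among families of members of C having the finite intersection property. For C ∈ C put μ(C) = {U ∈ η : C ∈ U}, and let ϑ be the topology on Y = η generated by taking {μ(C) : C ∈ C} as a subbase for the closed sets. Then (Y, ϑ) is compact, and the map f : X → Y defined by f(x) = {C ∈ C : x ∈ C} is an injective continuous closed map onto its image, i.e. a homeomorphic embedding of (X, τ) into (Y, ϑ). -/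
/-- A family of closed sets has the finite intersection property if every finite
subfamily has nonempty intersection. -/
def FipFamily (X : Type*) [TopologicalSpace X]
    (U : Set {C : Set X // IsClosed C}) : Prop :=
  ∀ G : Finset {C : Set X // IsClosed C}, ↑G ⊆ U →
    (⋂ C ∈ G, (C : Set X)).Nonempty

/-- `η`: the families of closed sets maximal (w.r.t. set inclusion) among the families
of closed sets having the finite intersection property — the ultra-closed filters. -/
def wallmanPoints (X : Type*) [TopologicalSpace X] : Set (Set {C : Set X // IsClosed C}) :=
  {U | FipFamily X U ∧ ∀ V : Set {C : Set X // IsClosed C}, FipFamily X V → U ⊆ V → U = V}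

/-- The Wallman topology `ϑ` on `Y = η`: generated by the family
`{μ(C) : C closed}`, where `μ(C) = {U ∈ η : C ∈ U}`, as a subbase for closed sets. -/
def wallmanTopology (X : Type*) [TopologicalSpace X] :
    TopologicalSpace ↥(wallmanPoints X) :=
  TopologicalSpace.generateFrom
    {W : Set ↥(wallmanPoints X) | ∃ C : {C : Set X // IsClosed C},
      W = {U : ↥(wallmanPoints X) | C ∈ (U : Set {C : Set X // IsClosed C})}ᶜ}

/-! An ultrafilter `F` on the Wallman space converges to every maximal f.i.p. family
containing the f.i.p. family `{C | μ(C) ∈ F}`; this gives compactness. The point `f x` lies in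
`μ(C)` exactly when `x ∈ C`, so `f` pulls `μ(C)` back to `C`, which makes `f` continuous and
closed onto its image. The T₁ axiom enters only through closed singletons: they make each `f x`
maximal and `f` injective. -/

namespace Wallman

variable {X : Type*} [TopologicalSpace X]

attribute [local instance] wallmanTopology

/-- The paper's `μ(C)`. -/
def basicClosed (C : {C : Set X // IsClosed C}) : Set (wallmanPoints X) :=
  {U | C ∈ (U : Set {C : Set X // IsClosed C})}

theorem isClosed_basicClosed (C : {C : Set X // IsClosed C}) : IsClosed (basicClosed C) :=
  isOpen_compl_iff.1 <| TopologicalSpace.isOpen_generateFrom_of_mem ⟨C, rfl⟩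

theorem fipFamily_sUnion_of_isChain {c : Set (Set {C : Set X // IsClosed C})}
    (hfip : ∀ U ∈ c, FipFamily X U) (hc : IsChain (· ⊆ ·) c) (hne : c.Nonempty) :
    FipFamily X (⋃₀ c) := by
  intro G hG
  have : Nonempty c := hne.to_subtype
  have hdir : Directed (· ⊆ ·) (fun U : c => (U : Set {C : Set X // IsClosed C})) :=
    hc.directed
  obtain ⟨U, hU⟩ := hdir.exists_mem_subset_of_finset_subset_biUnion
    (Set.sUnion_eq_iUnion ▸ hG)
  exact hfip U U.2 G hU

theorem FipFamily.exists_mem_wallmanPoints_superset {U : Set {C : Set X // IsClosed C}}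
    (hU : FipFamily X U) : ∃ V ∈ wallmanPoints X, U ⊆ V := by
  obtain ⟨V, hUV, hV⟩ := zorn_subset_nonempty {V | FipFamily X V}
    (fun c hfip hc hne => ⟨⋃₀ c, fipFamily_sUnion_of_isChain hfip hc hne,
      fun _ => Set.subset_sUnion_of_mem⟩) U hU
  exact ⟨V, ⟨hV.1, fun W hW hVW => subset_antisymm hVW (hV.2 hW hVW)⟩, hUV⟩

theorem fipFamily_setOf_basicClosed_mem (F : Filter (wallmanPoints X)) [F.NeBot] :
    FipFamily X {C | basicClosed C ∈ F} := by
  intro G hG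
  obtain ⟨V, hV⟩ := F.nonempty_of_mem <|
    (Filter.biInter_mem G.finite_toSet).2 fun C hC => hG hC
  exact V.2.1 G fun C hC => Set.mem_iInter₂.1 hV C hC

theorem compactSpace : CompactSpace (wallmanPoints X) := by
  refine ⟨isCompact_iff_ultrafilter_le_nhds.2 fun F _ => ?_⟩
  obtain ⟨V, hV, hFV⟩ := FipFamily.exists_mem_wallmanPoints_superset
    (fipFamily_setOf_basicClosed_mem (F : Filter (wallmanPoints X)))
  refine ⟨⟨V, hV⟩, Set.mem_univ _, ?_⟩
  refine (TopologicalSpace.tendsto_nhds_generateFrom_iff (m := id)).2 ?_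
  rintro _ ⟨C, rfl⟩ hVC
  exact Ultrafilter.compl_mem_iff_notMem.2 fun hC => hVC (hFV hC)

variable [T1Space X]

theorem setOf_mem_mem_wallmanPoints (x : X) :
    {C : {C : Set X // IsClosed C} | x ∈ (C : Set X)} ∈ wallmanPoints X := by
  refine ⟨fun G hG => ⟨x, Set.mem_iInter₂.2 fun C hC => hG hC⟩, fun V hV hxV => ?_⟩
  refine subset_antisymm hxV fun C hC => ?_
  let Cx : {C : Set X // IsClosed C} := ⟨{x}, isClosed_singleton⟩
  have hCx : Cx ∈ V := hxV rfl
  obtain ⟨y, hy⟩ := hV {C, Cx} (by simp [Set.insert_subset_iff, hC, hCx])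
  have hyC : y ∈ (C : Set X) := Set.mem_iInter₂.1 hy C (by simp)
  have hyx : y = x := Set.mem_iInter₂.1 hy Cx (by simp)
  exact hyx ▸ hyC

/-- The paper's `f`. -/
def ofPoint (x : X) : wallmanPoints X :=
  ⟨_, setOf_mem_mem_wallmanPoints x⟩

theorem preimage_ofPoint_basicClosed (C : {C : Set X // IsClosed C}) :
    ofPoint ⁻¹' basicClosed C = C :=
  rfl

theorem continuous_ofPoint : Continuous (ofPoint (X := X)) := by
  refine continuous_generateFrom_iff.2 ?_
  rintro _ ⟨C, rfl⟩
  exact C.2.isOpen_compl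

theorem ofPoint_injective : Function.Injective (ofPoint (X := X)) := by
  intro x y hxy
  have hy : y ∈ ofPoint ⁻¹' basicClosed ⟨{x}, isClosed_singleton⟩ := by
    rw [Set.mem_preimage, ← hxy]
    rfl
  exact (Set.mem_singleton_iff.1 hy).symm

theorem image_ofPoint_eq_basicClosed_inter_range (D : {C : Set X // IsClosed C}) :
    ofPoint '' (D : Set X) = basicClosed D ∩ Set.range ofPoint := by
  rw [← preimage_ofPoint_basicClosed, Set.image_preimage_eq_inter_range]

end Wallman

open Wallman in
/-- For a T₁ space `(X, τ)`, the space `(Y, ϑ)` of maximal f.i.p. families of closed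
sets with the Wallman topology is compact, and `x ↦ C(x) = {C closed : x ∈ C}` is an
injective continuous closed map onto its image, i.e. a homeomorphic embedding of
`(X, τ)` into `(Y, ϑ)`. -/
theorem wallman_compactification {X : Type*} [TopologicalSpace X] [T1Space X] :
    @CompactSpace ↥(wallmanPoints X) (wallmanTopology X) ∧
    ∃ f : X → ↥(wallmanPoints X),
      (∀ x : X, (f x : Set {C : Set X // IsClosed C}) =
          {C : {C : Set X // IsClosed C} | x ∈ (C : Set X)}) ∧
      Function.Injective f ∧
      @Continuous X ↥(wallmanPoints X) _ (wallmanTopology X) f ∧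
      (∀ D : Set X, IsClosed D →
        ∃ E : Set ↥(wallmanPoints X), @IsClosed _ (wallmanTopology X) E ∧
          f '' D = E ∩ Set.range f) :=
  ⟨compactSpace, ofPoint, fun _ => rfl, ofPoint_injective, continuous_ofPoint,
    fun D hD => ⟨basicClosed ⟨D, hD⟩, isClosed_basicClosed _,
      image_ofPoint_eq_basicClosed_inter_range ⟨D, hD⟩⟩⟩
end
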